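/- arXiv:2403.16181 — 7 statements merged into one kernel-verified Lean document; each statement's English description precedes it below -/
import Mathlib

section
/- (Scott) For countable L-structures M and N, if M ≡ᵇᶠ_α N for every countable ordinal α, then M is isomorphic to N. -/
open FirstOrder

/-- Two tuples have the same quantifier-free type. -/
def QFEquiv (L : FirstOrder.Language) (M N : Type*) [L.Structure M] [L.Structure N]
    {n : ℕ} (a : Fin n → M) (b : Fin n → N) : Prop :=
  ∀ φ : L.Formula (Fin n), φ.IsQF → (φ.Realize a ↔ φ.Realize b)

/-- The standard symmetric back-and-forth relation of rank `α`. -/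
def BF (L : FirstOrder.Language) (M N : Type*) [L.Structure M] [L.Structure N]
    (α : Ordinal) (n : ℕ) (a : Fin n → M) (b : Fin n → N) : Prop :=
  (α = 0 ∧ QFEquiv L M N a b) ∨
  (α ≠ 0 ∧
    (∀ β < α, ∀ (m : ℕ) (c : Fin m → M), ∃ d : Fin m → N,
      BF L M N β (n + m) (Fin.append a c) (Fin.append b d)) ∧
    (∀ β < α, ∀ (m : ℕ) (d : Fin m → N), ∃ c : Fin m → M,
      BF L M N β (n + m) (Fin.append a c) (Fin.append b d)))
termination_by α

/-!
Call tuples `a`, `b` good if `a ≡ᵇᶠ_α b` for every countable `α`. Goodness is back-and-forth: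
if for every `d` some countable `α_d` witnessed that `a c` and `b d` are not good, then
`δ = sup α_d` is still countable (there are countably many `d`), and `a ≡ᵇᶠ_{δ+1} b` would yield
a `d` with `a c ≡ᵇᶠ_δ b d`, in particular `≡ᵇᶠ_{α_d}`. Enumerating `M ⊕ N` and extending on the
appropriate side at each step gives a chain of good tuples exhausting `M` and `N`; since good
tuples have the same quantifier-free type, the union of the chain is the graph of an isomorphism.
-/

open FirstOrder.Language.Structure (funMap RelMap)
open scoped Ordinal

universe u

section

variable {L : FirstOrder.Language} {M N : Type*} [L.Structure M] [L.Structure N]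

namespace QFEquiv

variable {n : ℕ} {a : Fin n → M} {b : Fin n → N}

theorem comp (h : QFEquiv L M N a b) {k : ℕ} (ι : Fin k → Fin n) :
    QFEquiv L M N (a ∘ ι) (b ∘ ι) := fun φ hφ => by
  simpa only [Language.Formula.realize_relabel] using h (φ.relabel ι) (hφ.relabel _)

theorem eq_iff (h : QFEquiv L M N a b) (i j : Fin n) : a i = a j ↔ b i = b j := by
  simpa using h ((Language.Term.var i).equal (Language.Term.var j))
    (Language.BoundedFormula.IsAtomic.equal _ _).isQF

theorem funMap_eq_iff (h : QFEquiv L M N a b) {m : ℕ} (f : L.Functions m) (t : Fin m → Fin n)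
    (i : Fin n) : funMap f (a ∘ t) = a i ↔ funMap f (b ∘ t) = b i := by
  simpa [Function.comp_def] using
    h ((Language.Term.func f fun j => Language.Term.var (t j)).equal (Language.Term.var i))
      (Language.BoundedFormula.IsAtomic.equal _ _).isQF

theorem relMap_iff (h : QFEquiv L M N a b) (r : L.Relations n) : RelMap r a ↔ RelMap r b := by
  simpa using h (r.formula Language.Term.var) (Language.BoundedFormula.IsAtomic.rel _ _).isQF

end QFEquiv

def Equiv.toLEquivOfQFEquiv (e : M ≃ N) (he : ∀ n (a : Fin n → M), QFEquiv L M N a (e ∘ a)) :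
    M ≃[L] N where
  toEquiv := e
  map_fun' {n} f x := by
    have := (he _ (Fin.snoc x (funMap f x))).funMap_eq_iff f Fin.castSucc (Fin.last n)
    simp only [Fin.comp_snoc, Fin.snoc_comp_castSucc, Fin.snoc_last, true_iff] at this
    exact this.symm
  map_rel' r x := ((he _ x).relMap_iff r).symm

theorem nonempty_equiv_of_forall_qfEquiv (R : M → N → Prop) (hM : ∀ x, ∃ y, R x y)
    (hN : ∀ y, ∃ x, R x y)
    (hR : ∀ n (a : Fin n → M) (b : Fin n → N), (∀ i, R (a i) (b i)) → QFEquiv L M N a b) :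
    Nonempty (M ≃[L] N) := by
  have eq_iff {x x' y y'} (h : R x y) (h' : R x' y') : x = x' ↔ y = y' :=
    (hR 2 ![x, x'] ![y, y'] (Fin.forall_fin_two.2 ⟨h, h'⟩)).eq_iff 0 1
  choose f hf using hM
  choose g hg using hN
  let e : M ≃ N :=
    { toFun := f
      invFun := g
      left_inv := fun x => (eq_iff (hg (f x)) (hf x)).2 rfl
      right_inv := fun y => (eq_iff (hf (g y)) (hg y)).1 rfl }
  exact ⟨e.toLEquivOfQFEquiv fun n a => hR n a (e ∘ a) fun i => hf (a i)⟩

theorem exists_seq_of_forall_snoc {β : Type*} (P : ∀ k, (Fin k → β) → Prop) (h0 : P 0 Fin.elim0)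
    (step : ∀ k (a : Fin k → β), P k a → ∃ x, P (k + 1) (Fin.snoc a x)) :
    ∃ A : ℕ → β, ∀ k, P k fun i => A i := by
  choose next hnext using step
  let s : ∀ k, {a : Fin k → β // P k a} := fun k =>
    Nat.rec ⟨Fin.elim0, h0⟩ (fun k a => ⟨Fin.snoc a.1 (next k a.1 a.2), hnext k a.1 a.2⟩) k
  let A (k : ℕ) : β := next k (s k).1 (s k).2
  have hs (k : ℕ) : (s k).1 = fun i : Fin k => A i := by
    induction k with
    | zero => exact Subsingleton.elim _ _
    | succ k ih =>
      change Fin.snoc (α := fun _ => β) (s k).1 (A k) = _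
      rw [ih]
      exact Fin.snoc_init_self fun i : Fin (k + 1) => A i
  exact ⟨A, fun k => hs k ▸ (s k).2⟩

section BackAndForth

variable [Countable M] [Countable N] (P : ∀ n, (Fin n → M) → (Fin n → N) → Prop)
  (h0 : P 0 Fin.elim0 Fin.elim0)
  (forth : ∀ n a b, P n a b → ∀ x, ∃ y, P (n + 1) (Fin.snoc a x) (Fin.snoc b y))
  (back : ∀ n a b, P n a b → ∀ y, ∃ x, P (n + 1) (Fin.snoc a x) (Fin.snoc b y))
include h0 forth back

theorem exists_seq_of_backAndForth [Nonempty (M ⊕ N)] :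
    ∃ A : ℕ → M × N, (∀ k, P k (fun i : Fin k => (A i).1) (fun i => (A i).2)) ∧
      Function.Surjective (Prod.fst ∘ A) ∧ Function.Surjective (Prod.snd ∘ A) := by
  obtain ⟨e, he⟩ := exists_surjective_nat (M ⊕ N)
  -- Step `k` of the construction puts the `k`-th element of `M ⊕ N` into the chain.
  let Visits (k : ℕ) (p : M × N) : Prop := Sum.elim (· = p.1) (· = p.2) (e k)
  obtain ⟨A, hA⟩ := exists_seq_of_forall_snoc
    (fun k p => P k (Prod.fst ∘ p) (Prod.snd ∘ p) ∧ ∀ i : Fin k, Visits i (p i))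
    ⟨by convert h0, finZeroElim⟩ fun k p ⟨hp, hvisits⟩ => by
      obtain ⟨q, hq, hvisit⟩ : ∃ q : M × N,
          P (k + 1) (Fin.snoc (Prod.fst ∘ p) q.1) (Fin.snoc (Prod.snd ∘ p) q.2) ∧ Visits k q := by
        rcases hk : e k with x | y
        · obtain ⟨y, hy⟩ := forth _ _ _ hp x
          exact ⟨(x, y), hy, by simp [Visits, hk]⟩
        · obtain ⟨x, hx⟩ := back _ _ _ hp y
          exact ⟨(x, y), hx, by simp [Visits, hk]⟩
      refine ⟨q, by simpa only [Fin.comp_snoc] using hq, Fin.forall_fin_succ'.2 ⟨?_, ?_⟩⟩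
      · simpa using hvisits
      · simpa using hvisit
  have hvisit (k : ℕ) : Visits k (A k) := (hA (k + 1)).2 (Fin.last k)
  refine ⟨A, fun k => (hA k).1, fun x => ?_, fun y => ?_⟩
  · obtain ⟨k, hk⟩ := he (Sum.inl x)
    exact ⟨k, by simpa only [Visits, hk, Sum.elim_inl, Function.comp_apply, eq_comm] using hvisit k⟩
  · obtain ⟨k, hk⟩ := he (Sum.inr y)
    exact ⟨k, by simpa only [Visits, hk, Sum.elim_inr, Function.comp_apply, eq_comm] using hvisit k⟩

theorem nonempty_equiv_of_backAndForth (hqf : ∀ n a b, P n a b → QFEquiv L M N a b) :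
    Nonempty (M ≃[L] N) := by
  rcases isEmpty_or_nonempty (M ⊕ N) with hMN | hMN
  · refine nonempty_equiv_of_forall_qfEquiv (fun _ _ => False)
      (fun x => isEmptyElim (Sum.inl x : M ⊕ N)) (fun y => isEmptyElim (Sum.inr y : M ⊕ N))
      fun n a b _ => ?_
    cases n with
    | zero =>
      simpa only [Subsingleton.elim a Fin.elim0, Subsingleton.elim b Fin.elim0] using hqf 0 _ _ h0
    | succ n => exact isEmptyElim (Sum.inl (a 0) : M ⊕ N)
  obtain ⟨A, hA, hM, hN⟩ := exists_seq_of_backAndForth P h0 forth back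
  refine nonempty_equiv_of_forall_qfEquiv (fun x y => ∃ k, A k = (x, y))
    (fun x => ?_) (fun y => ?_) fun n a b hab => ?_
  · obtain ⟨k, rfl⟩ := hM x
    exact ⟨(A k).2, k, rfl⟩
  · obtain ⟨k, rfl⟩ := hN y
    exact ⟨(A k).1, k, rfl⟩
  · choose k hk using hab
    obtain ⟨K, hK⟩ := Finite.exists_le k
    have := (hqf _ _ _ (hA (K + 1))).comp fun i => ⟨k i, Nat.lt_succ_of_le (hK i)⟩
    convert this using 1 <;> funext i <;> simp [hk]

end BackAndForth

section BF

variable {n : ℕ} {a : Fin n → M} {b : Fin n → N}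

theorem bf_zero_iff : BF L M N 0 n a b ↔ QFEquiv L M N a b := by
  rw [BF]
  simp

theorem bf_iff_of_ne_zero {α : Ordinal} (hα : α ≠ 0) :
    BF L M N α n a b ↔
      (∀ β < α, ∀ (m : ℕ) (c : Fin m → M), ∃ d : Fin m → N,
        BF L M N β (n + m) (Fin.append a c) (Fin.append b d)) ∧
      (∀ β < α, ∀ (m : ℕ) (d : Fin m → N), ∃ c : Fin m → M,
        BF L M N β (n + m) (Fin.append a c) (Fin.append b d)) := by
  rw [BF]
  simp [hα]

theorem BF.symm {α : Ordinal} (h : BF L M N α n a b) : BF L N M α n b a := by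
  induction α using WellFoundedLT.induction generalizing n with
  | _ α ih =>
    rcases eq_or_ne α 0 with rfl | hα
    · exact bf_zero_iff.2 fun φ hφ => (bf_zero_iff.1 h φ hφ).symm
    · obtain ⟨hforth, hback⟩ := (bf_iff_of_ne_zero hα).1 h
      refine (bf_iff_of_ne_zero hα).2 ⟨fun β hβ m d => ?_, fun β hβ m c => ?_⟩
      · obtain ⟨c, hc⟩ := hback β hβ m d
        exact ⟨c, ih β hβ hc⟩
      · obtain ⟨d, hd⟩ := hforth β hβ m c
        exact ⟨d, ih β hβ hd⟩

theorem BF.qfEquiv {α : Ordinal} (h : BF L M N α n a b) : QFEquiv L M N a b := by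
  rcases eq_or_ne α 0 with rfl | hα
  · exact bf_zero_iff.1 h
  · obtain ⟨d, hd⟩ := ((bf_iff_of_ne_zero hα).1 h).1 0 (pos_iff_ne_zero.2 hα) 0 Fin.elim0
    have hqf := bf_zero_iff.1 hd
    rw [Subsingleton.elim d Fin.elim0, Fin.append_elim0, Fin.append_elim0] at hqf
    exact hqf

theorem BF.mono {α β : Ordinal} (h : BF L M N α n a b) (hβα : β ≤ α) : BF L M N β n a b := by
  rcases eq_or_ne β 0 with rfl | hβ
  · exact bf_zero_iff.2 h.qfEquiv
  · obtain ⟨hforth, hback⟩ := (bf_iff_of_ne_zero (ne_bot_of_le_ne_bot hβ hβα)).1 h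
    exact (bf_iff_of_ne_zero hβ).2
      ⟨fun γ hγ => hforth γ (hγ.trans_le hβα), fun γ hγ => hback γ (hγ.trans_le hβα)⟩

end BF

def BFCountable (L : FirstOrder.Language) (M N : Type*) [L.Structure M] [L.Structure N]
    (n : ℕ) (a : Fin n → M) (b : Fin n → N) : Prop :=
  ∀ α : Ordinal.{u}, α < ω₁ → BF L M N α n a b

-- The explicit `.{u}` keeps the ordinals of hypothesis and conclusion in one universe.
namespace BFCountable

variable {n : ℕ} {a : Fin n → M} {b : Fin n → N}

theorem symm (h : BFCountable.{u} L M N n a b) : BFCountable.{u} L N M n b a :=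
  fun α hα => (h α hα).symm

theorem qfEquiv (h : BFCountable.{u} L M N n a b) : QFEquiv L M N a b :=
  (h 0 (Cardinal.isSuccLimit_omega 1).bot_lt).qfEquiv

theorem forth [Countable N] (h : BFCountable.{u} L M N n a b) {m : ℕ} (c : Fin m → M) :
    ∃ d : Fin m → N, BFCountable.{u} L M N (n + m) (Fin.append a c) (Fin.append b d) := by
  by_contra! hfail
  simp only [BFCountable, not_forall] at hfail
  choose α hα hnot using hfail
  have hδ : ⨆ d, α d < ω₁ := Ordinal.iSup_lt_omega_one hα
  obtain ⟨d, hd⟩ := ((bf_iff_of_ne_zero (Order.succ_ne_bot _)).1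
    (h _ ((Cardinal.isSuccLimit_omega 1).succ_lt hδ))).1 _ (Order.lt_succ _) m c
  exact hnot d (hd.mono (Ordinal.le_iSup α d))

theorem back [Countable M] (h : BFCountable.{u} L M N n a b) {m : ℕ} (d : Fin m → N) :
    ∃ c : Fin m → M, BFCountable.{u} L M N (n + m) (Fin.append a c) (Fin.append b d) :=
  (h.symm.forth d).imp fun _ hc => hc.symm

end BFCountable

end

/-- Scott: countable back-and-forth equivalent structures (equivalent at every
countable ordinal rank) are isomorphic. -/
theorem scott_theorem {L : FirstOrder.Language} {M N : Type*}
    [L.Structure M] [L.Structure N] [Countable M] [Countable N]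
    (h : ∀ α : Ordinal, α.card ≤ Cardinal.aleph0 →
      BF L M N α 0 (fun i => i.elim0) (fun i => i.elim0)) :
    Nonempty (M ≃[L] N) := by
  have h0 : BFCountable L M N 0 Fin.elim0 Fin.elim0 := fun α hα =>
    h α (by rwa [← Cardinal.ord_aleph, Cardinal.lt_ord, Cardinal.lt_aleph_one_iff] at hα)
  refine nonempty_equiv_of_backAndForth (BFCountable L M N) h0 (fun n a b hab x => ?_)
    (fun n a b hab y => ?_) fun n a b hab => hab.qfEquiv
  · obtain ⟨d, hd⟩ := hab.forth fun _ : Fin 1 => x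
    exact ⟨d 0, by simpa only [Fin.append_right_eq_snoc] using hd⟩
  · obtain ⟨c, hc⟩ := hab.back fun _ : Fin 1 => y
    exact ⟨c 0, by simpa only [Fin.append_right_eq_snoc] using hc⟩
end

section
/- If G₁ ≡ᵇᶠ_α H₁ and G₂ ≡ᵇᶠ_α H₂ as groups, then the free products satisfy G₁ * G₂ ≡ᵇᶠ_α H₁ * H₂. -/
/-- Tuples `g` and `h` satisfy the same group-word equations (equal quantifier-free types). -/
def WordEq {ι : Type*} (G H : Type*) [Group G] [Group H]
    (g : ι → G) (h : ι → H) : Prop :=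
  ∀ w : FreeGroup ι, FreeGroup.lift g w = 1 ↔ FreeGroup.lift h w = 1

/-- The standard symmetric back-and-forth relation of rank `α` between groups with
distinguished tuples. -/
def GBF (G H : Type*) [Group G] [Group H]
    (α : Ordinal) (n : ℕ) (g : Fin n → G) (h : Fin n → H) : Prop :=
  (α = 0 ∧ WordEq G H g h) ∨
  (α ≠ 0 ∧
    (∀ β < α, ∀ (m : ℕ) (c : Fin m → G), ∃ d : Fin m → H,
      GBF G H β (n + m) (Fin.append g c) (Fin.append h d)) ∧
    (∀ β < α, ∀ (m : ℕ) (d : Fin m → H), ∃ c : Fin m → G,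
      GBF G H β (n + m) (Fin.append g c) (Fin.append h d)))
termination_by α

/-!
By the normal form theorem, `Coprod.map f₁ f₂` is injective whenever `f₁` and `f₂` are. Hence
whether a word in the letters of tuples `g₁` in `G₁` and `g₂` in `G₂` vanishes in `G₁ ∗ G₂`
depends only on the kernels of `FreeGroup.lift g₁` and `FreeGroup.lift g₂`, i.e. on the word
equations satisfied by `g₁` and `g₂`; this is the rank-`0` case. Every finite tuple of `G₁ ∗ G₂`
is a tuple of words in finitely many elements of the factors, so a back-and-forth move in the free
product is answered by back-and-forth moves in the two factors, and induction on the rank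
concludes.
-/

open Function

namespace Monoid.CoprodI

variable {ι : Type*} {M N : ι → Type*} [∀ i, Monoid (M i)] [∀ i, Monoid (N i)]

def Word.map (f : ∀ i, M i →* N i) (hf : ∀ i, Injective (f i)) (w : Word M) : Word N where
  toList := w.toList.map (Sigma.map id fun i => f i)
  ne_one := by
    simp only [List.mem_map]
    rintro _ ⟨l, hl, rfl⟩
    exact (hf l.1).ne_iff' (map_one _) |>.2 (w.ne_one l hl)
  chain_ne := (List.isChain_map _).2 w.chain_ne

theorem Word.prod_map (f : ∀ i, M i →* N i) (hf : ∀ i, Injective (f i)) (w : Word M) :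
    (w.map f hf).prod = lift (fun i => of.comp (f i)) w.prod := by
  simp only [Word.prod, Word.map, map_list_prod, List.map_map]
  rfl

theorem Word.map_injective (f : ∀ i, M i →* N i) (hf : ∀ i, Injective (f i)) :
    Injective (Word.map f hf) := fun _ _ h =>
  Word.ext <| List.map_injective_iff.2 (injective_id.sigma_map hf) (congrArg Word.toList h)

theorem lift_comp_of_injective (f : ∀ i, M i →* N i) (hf : ∀ i, Injective (f i)) :
    Injective (lift fun i => of.comp (f i)) := by
  classical
  have eq_prod_map (x : CoprodI M) :
      lift (fun i => of.comp (f i)) x = (Word.map f hf (Word.equiv x)).prod := by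
    rw [Word.prod_map]
    exact congrArg _ (Word.equiv.symm_apply_apply x).symm
  intro x y h
  rw [eq_prod_map, eq_prod_map] at h
  exact Word.equiv.injective (Word.map_injective f hf (Word.equiv.symm.injective h))

end Monoid.CoprodI

namespace Monoid.Coprod

universe u v u' v'

section Monoid

/-- `M ∗ N` is the coproduct of this `Bool`-indexed family, lifted to a common universe. -/
def boolFamily (M : Type u) (N : Type v) (b : Bool) : Type max u v :=
  cond b (ULift.{v} M) (ULift.{u} N)

variable {M : Type u} {N : Type v} {M' : Type u'} {N' : Type v'}
  [Monoid M] [Monoid N] [Monoid M'] [Monoid N']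

instance : ∀ b, Monoid (boolFamily M N b)
  | true => inferInstanceAs (Monoid (ULift M))
  | false => inferInstanceAs (Monoid (ULift N))

def toCoprodI : M ∗ N →* CoprodI (boolFamily M N) :=
  lift ((CoprodI.of (i := true)).comp MulEquiv.ulift.symm.toMonoidHom)
    ((CoprodI.of (i := false)).comp MulEquiv.ulift.symm.toMonoidHom)

theorem toCoprodI_injective : Injective (toCoprodI : M ∗ N →* _) := by
  let back : CoprodI (boolFamily M N) →* M ∗ N := CoprodI.lift fun
    | true => inl.comp MulEquiv.ulift.toMonoidHom
    | false => inr.comp MulEquiv.ulift.toMonoidHom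
  have : back.comp toCoprodI = .id _ := hom_ext rfl rfl
  exact LeftInverse.injective (DFunLike.congr_fun this)

def boolFamilyMap (f : M →* M') (g : N →* N') : ∀ b, boolFamily M N b →* boolFamily M' N' b
  | true => MulEquiv.ulift.symm.toMonoidHom.comp (f.comp MulEquiv.ulift.toMonoidHom)
  | false => MulEquiv.ulift.symm.toMonoidHom.comp (g.comp MulEquiv.ulift.toMonoidHom)

theorem map_injective {f : M →* M'} {g : N →* N'} (hf : Injective f) (hg : Injective g) :
    Injective (map f g) := by
  have hfg : ∀ b, Injective (boolFamilyMap f g b)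
    | true => MulEquiv.ulift.symm.injective.comp (hf.comp MulEquiv.ulift.injective)
    | false => MulEquiv.ulift.symm.injective.comp (hg.comp MulEquiv.ulift.injective)
  have : toCoprodI.comp (map f g) =
      (CoprodI.lift fun b => CoprodI.of.comp (boolFamilyMap f g b)).comp toCoprodI :=
    hom_ext rfl rfl
  refine Injective.of_comp (f := toCoprodI) ?_
  rw [← MonoidHom.coe_comp, this, MonoidHom.coe_comp]
  exact (CoprodI.lift_comp_of_injective _ hfg).comp toCoprodI_injective

end Monoid

section Group

variable {A B G₁ G₂ H₁ H₂ : Type*} [Group A] [Group B] [Group G₁] [Group G₂] [Group H₁] [Group H₂]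

theorem map_eq_one_iff_map_mk'_eq_one {f₁ : A →* G₁} {f₂ : B →* G₂}
    {N₁ : Subgroup A} [N₁.Normal] {N₂ : Subgroup B} [N₂.Normal]
    (h₁ : N₁ = f₁.ker) (h₂ : N₂ = f₂.ker) (x : A ∗ B) :
    map f₁ f₂ x = 1 ↔ map (QuotientGroup.mk' N₁) (QuotientGroup.mk' N₂) x = 1 := by
  have factor : map f₁ f₂ =
      (map (QuotientGroup.lift N₁ f₁ h₁.le) (QuotientGroup.lift N₂ f₂ h₂.le)).comp
        (map (QuotientGroup.mk' N₁) (QuotientGroup.mk' N₂)) := by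
    rw [map_comp_map, QuotientGroup.lift_comp_mk', QuotientGroup.lift_comp_mk']
  rw [factor, MonoidHom.comp_apply]
  exact map_eq_one_iff _ <| map_injective ((QuotientGroup.injective_lift_iff _ _ _).2 h₁)
    ((QuotientGroup.injective_lift_iff _ _ _).2 h₂)

theorem map_eq_one_iff_of_ker_eq {f₁ : A →* G₁} {f₂ : B →* G₂} {k₁ : A →* H₁} {k₂ : B →* H₂}
    (h₁ : f₁.ker = k₁.ker) (h₂ : f₂.ker = k₂.ker) (x : A ∗ B) :
    map f₁ f₂ x = 1 ↔ map k₁ k₂ x = 1 := by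
  rw [map_eq_one_iff_map_mk'_eq_one rfl rfl, map_eq_one_iff_map_mk'_eq_one h₁ h₂]

end Group

end Monoid.Coprod

namespace FreeGroup

variable {α β G H : Type*} [Group G] [Group H]

theorem lift_comp_map (f : β → G) (φ : α → β) :
    (lift f).comp (map φ) = lift (f ∘ φ) :=
  ext_hom _ _ fun _ => by simp

theorem lift_comp_apply (F : G →* H) (f : α → G) (x : FreeGroup α) :
    lift (F ∘ f) x = F (lift f x) :=
  DFunLike.congr_fun (ext_hom (lift (F ∘ f)) (F.comp (lift f)) fun _ => by simp) x

end FreeGroup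

section BackAndForth

variable {G H : Type*} [Group G] [Group H]

theorem wordEq_iff_ker_eq {ι : Type*} {g : ι → G} {h : ι → H} :
    WordEq G H g h ↔ (FreeGroup.lift g).ker = (FreeGroup.lift h).ker := by
  simp [WordEq, SetLike.ext_iff, MonoidHom.mem_ker]

theorem gbf_zero_iff {n : ℕ} {g : Fin n → G} {h : Fin n → H} :
    GBF G H 0 n g h ↔ WordEq G H g h := by
  rw [GBF]
  simp

theorem gbf_iff_of_ne_zero {α : Ordinal} (hα : α ≠ 0) {n : ℕ} {g : Fin n → G} {h : Fin n → H} :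
    GBF G H α n g h ↔
      (∀ β < α, ∀ (m : ℕ) (c : Fin m → G), ∃ d : Fin m → H,
        GBF G H β (n + m) (Fin.append g c) (Fin.append h d)) ∧
      (∀ β < α, ∀ (m : ℕ) (d : Fin m → H), ∃ c : Fin m → G,
        GBF G H β (n + m) (Fin.append g c) (Fin.append h d)) := by
  rw [GBF]
  simp [hα]

end BackAndForth

section WordEval

open Monoid.Coprod

variable {G₁ G₂ H₁ H₂ : Type*} [Group G₁] [Group G₂] [Group H₁] [Group H₂]

def wordEval {ι₁ ι₂ : Type*} (g₁ : ι₁ → G₁) (g₂ : ι₂ → G₂) :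
    FreeGroup ι₁ ∗ FreeGroup ι₂ →* G₁ ∗ G₂ :=
  map (FreeGroup.lift g₁) (FreeGroup.lift g₂)

theorem WordEq.wordEval_comp {ι ι₁ ι₂ : Type*} {g₁ : ι₁ → G₁} {h₁ : ι₁ → H₁}
    {g₂ : ι₂ → G₂} {h₂ : ι₂ → H₂} (e₁ : WordEq G₁ H₁ g₁ h₁) (e₂ : WordEq G₂ H₂ g₂ h₂)
    (w : ι → FreeGroup ι₁ ∗ FreeGroup ι₂) :
    WordEq (G₁ ∗ G₂) (H₁ ∗ H₂) (wordEval g₁ g₂ ∘ w) (wordEval h₁ h₂ ∘ w) := fun v => by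
  rw [FreeGroup.lift_comp_apply, FreeGroup.lift_comp_apply]
  exact map_eq_one_iff_of_ker_eq (wordEq_iff_ker_eq.1 e₁) (wordEq_iff_ker_eq.1 e₂) _

theorem wordEval_map_map {ι₁ ι₂ κ₁ κ₂ : Type*} (g₁ : κ₁ → G₁) (g₂ : κ₂ → G₂)
    (φ₁ : ι₁ → κ₁) (φ₂ : ι₂ → κ₂) (x : FreeGroup ι₁ ∗ FreeGroup ι₂) :
    wordEval g₁ g₂ (map (FreeGroup.map φ₁) (FreeGroup.map φ₂) x) =
      wordEval (g₁ ∘ φ₁) (g₂ ∘ φ₂) x := by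
  rw [wordEval, wordEval, ← MonoidHom.comp_apply, map_comp_map, FreeGroup.lift_comp_map,
    FreeGroup.lift_comp_map]

variable {n₁ n₂ k₁ k₂ : ℕ} (g₁ : Fin n₁ → G₁) (a : Fin k₁ → G₁) (g₂ : Fin n₂ → G₂) (b : Fin k₂ → G₂)

theorem wordEval_append_castAdd (x : FreeGroup (Fin n₁) ∗ FreeGroup (Fin n₂)) :
    wordEval (Fin.append g₁ a) (Fin.append g₂ b)
      (map (FreeGroup.map (Fin.castAdd k₁)) (FreeGroup.map (Fin.castAdd k₂)) x) =
      wordEval g₁ g₂ x := by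
  simp only [wordEval_map_map, comp_def, Fin.append_left]

theorem wordEval_append_natAdd (x : FreeGroup (Fin k₁) ∗ FreeGroup (Fin k₂)) :
    wordEval (Fin.append g₁ a) (Fin.append g₂ b)
      (map (FreeGroup.map (Fin.natAdd n₁)) (FreeGroup.map (Fin.natAdd n₂)) x) =
      wordEval a b x := by
  simp only [wordEval_map_map, comp_def, Fin.append_right]

def appendWords {m m' : ℕ} (w : Fin m → FreeGroup (Fin n₁) ∗ FreeGroup (Fin n₂))
    (u : Fin m' → FreeGroup (Fin k₁) ∗ FreeGroup (Fin k₂)) :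
    Fin (m + m') → FreeGroup (Fin (n₁ + k₁)) ∗ FreeGroup (Fin (n₂ + k₂)) :=
  Fin.append (map (FreeGroup.map (Fin.castAdd k₁)) (FreeGroup.map (Fin.castAdd k₂)) ∘ w)
    (map (FreeGroup.map (Fin.natAdd n₁)) (FreeGroup.map (Fin.natAdd n₂)) ∘ u)

theorem wordEval_comp_appendWords {m m' : ℕ} (w : Fin m → FreeGroup (Fin n₁) ∗ FreeGroup (Fin n₂))
    (u : Fin m' → FreeGroup (Fin k₁) ∗ FreeGroup (Fin k₂)) :
    wordEval (Fin.append g₁ a) (Fin.append g₂ b) ∘ appendWords w u =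
      Fin.append (wordEval g₁ g₂ ∘ w) (wordEval a b ∘ u) := by
  ext j
  cases j using Fin.addCases <;>
    simp [appendWords, wordEval_append_castAdd, wordEval_append_natAdd]

theorem exists_eq_wordEval (x : G₁ ∗ G₂) :
    ∃ (k₁ k₂ : ℕ) (a : Fin k₁ → G₁) (b : Fin k₂ → G₂) (u : FreeGroup (Fin k₁) ∗ FreeGroup (Fin k₂)),
      x = wordEval a b u := by
  induction x using induction_on with
  | inl x => exact ⟨1, 0, ![x], ![], inl (FreeGroup.of 0), by simp [wordEval]⟩
  | inr x => exact ⟨0, 1, ![], ![x], inr (FreeGroup.of 0), by simp [wordEval]⟩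
  | mul x y hx hy =>
    obtain ⟨k₁, k₂, a, b, u, rfl⟩ := hx
    obtain ⟨k₁', k₂', a', b', u', rfl⟩ := hy
    refine ⟨_, _, Fin.append a a', Fin.append b b',
      map (FreeGroup.map (Fin.castAdd k₁')) (FreeGroup.map (Fin.castAdd k₂')) u *
        map (FreeGroup.map (Fin.natAdd k₁)) (FreeGroup.map (Fin.natAdd k₂)) u', ?_⟩
    rw [map_mul, wordEval_append_castAdd, wordEval_append_natAdd]

theorem exists_eq_wordEval_comp {m : ℕ} (c : Fin m → G₁ ∗ G₂) :
    ∃ (k₁ k₂ : ℕ) (a : Fin k₁ → G₁) (b : Fin k₂ → G₂)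
      (u : Fin m → FreeGroup (Fin k₁) ∗ FreeGroup (Fin k₂)), c = wordEval a b ∘ u := by
  induction m with
  | zero => exact ⟨0, 0, ![], ![], ![], Subsingleton.elim _ _⟩
  | succ m ih =>
    obtain ⟨k₁, k₂, a, b, u, hu⟩ := ih (Fin.init c)
    obtain ⟨k₁', k₂', a', b', u', hu'⟩ := exists_eq_wordEval (c (Fin.last m))
    refine ⟨_, _, Fin.append a a', Fin.append b b', appendWords u ![u'], ?_⟩
    rw [wordEval_comp_appendWords, ← hu, Fin.append_right_eq_snoc, comp_apply,
      Matrix.cons_val_zero, ← hu', Fin.snoc_init_self]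

end WordEval

open Monoid.Coprod

theorem gbf_wordEval_comp {G₁ G₂ H₁ H₂ : Type*} [Group G₁] [Group G₂] [Group H₁] [Group H₂]
    (α : Ordinal) {n₁ n₂ : ℕ} {g₁ : Fin n₁ → G₁} {h₁ : Fin n₁ → H₁} {g₂ : Fin n₂ → G₂}
    {h₂ : Fin n₂ → H₂} (B₁ : GBF G₁ H₁ α n₁ g₁ h₁) (B₂ : GBF G₂ H₂ α n₂ g₂ h₂) {m : ℕ}
    (w : Fin m → FreeGroup (Fin n₁) ∗ FreeGroup (Fin n₂)) :
    GBF (G₁ ∗ G₂) (H₁ ∗ H₂) α m (wordEval g₁ g₂ ∘ w) (wordEval h₁ h₂ ∘ w) := by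
  induction α using WellFoundedLT.induction generalizing n₁ n₂ m with | _ α ih
  rcases eq_or_ne α 0 with rfl | hα
  · rw [gbf_zero_iff] at B₁ B₂ ⊢
    exact B₁.wordEval_comp B₂ w
  obtain ⟨forth₁, back₁⟩ := (gbf_iff_of_ne_zero hα).1 B₁
  obtain ⟨forth₂, back₂⟩ := (gbf_iff_of_ne_zero hα).1 B₂
  refine (gbf_iff_of_ne_zero hα).2 ⟨fun β hβ m' c => ?_, fun β hβ m' d => ?_⟩
  · obtain ⟨k₁, k₂, a, b, u, rfl⟩ := exists_eq_wordEval_comp c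
    obtain ⟨a', ha⟩ := forth₁ β hβ k₁ a
    obtain ⟨b', hb⟩ := forth₂ β hβ k₂ b
    refine ⟨wordEval a' b' ∘ u, ?_⟩
    rw [← wordEval_comp_appendWords, ← wordEval_comp_appendWords]
    exact ih β hβ ha hb _
  · obtain ⟨k₁, k₂, a', b', u, rfl⟩ := exists_eq_wordEval_comp d
    obtain ⟨a, ha⟩ := back₁ β hβ k₁ a'
    obtain ⟨b, hb⟩ := back₂ β hβ k₂ b'
    refine ⟨wordEval a b ∘ u, ?_⟩
    rw [← wordEval_comp_appendWords, ← wordEval_comp_appendWords]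
    exact ih β hβ ha hb _

/-- Back-and-forth equivalence is preserved by free products of groups. -/
theorem gbf_coprod {G₁ G₂ H₁ H₂ : Type*} [Group G₁] [Group G₂] [Group H₁] [Group H₂]
    {α : Ordinal}
    (h₁ : GBF G₁ H₁ α 0 (fun i => i.elim0) (fun i => i.elim0))
    (h₂ : GBF G₂ H₂ α 0 (fun i => i.elim0) (fun i => i.elim0)) :
    GBF (Monoid.Coprod G₁ G₂) (Monoid.Coprod H₁ H₂) α 0
      (fun i => i.elim0) (fun i => i.elim0) := by
  convert gbf_wordEval_comp α h₁ h₂ ![]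
end

section
/- (Knight–Saraph) If G and H are groups with H finitely generated and G ≡ᵇᶠ_3 H, then G ≅ H. -/
theorem KS.lift_map {ι κ G : Type*} [Group G] (π : κ → ι) (f : ι → G) (w : FreeGroup κ) :
    FreeGroup.lift f (FreeGroup.map π w) = FreeGroup.lift (f ∘ π) w := by
  have : (FreeGroup.lift f).comp (FreeGroup.map π) = FreeGroup.lift (f ∘ π) := by
    ext x; simp
  exact DFunLike.congr_fun this w

theorem KS.wordEq_comp {ι κ G H : Type*} [Group G] [Group H] (π : κ → ι)
    {g : ι → G} {h : ι → H} (hw : WordEq G H g h) : WordEq G H (g ∘ π) (h ∘ π) := by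
  intro w
  rw [← KS.lift_map, ← KS.lift_map]
  exact hw _

theorem KS.gbf_zero {G H : Type*} [Group G] [Group H] {n : ℕ} {g : Fin n → G} {h : Fin n → H}
    (h0 : GBF G H 0 n g h) : WordEq G H g h := by
  rw [GBF] at h0
  rcases h0 with ⟨_, hw⟩ | ⟨hne, _⟩
  · exact hw
  · exact absurd rfl hne

/-- From any GBF relation (at any rank) we can extract the word equivalence. -/
theorem KS.gbf_wordEq {G H : Type*} [Group G] [Group H] {α : Ordinal} {n : ℕ}
    {g : Fin n → G} {h : Fin n → H} (hb : GBF G H α n g h) : WordEq G H g h := by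
  rw [GBF] at hb
  rcases hb with ⟨_, hw⟩ | ⟨hne, hforth, _⟩
  · exact hw
  · obtain ⟨d, hd⟩ := hforth 0 (pos_iff_ne_zero.2 hne) 0 Fin.elim0
    have hw := KS.gbf_zero hd
    rw [Fin.append_right_nil g Fin.elim0 rfl, Fin.append_right_nil h d rfl] at hw
    have := KS.wordEq_comp (Fin.cast (Nat.add_zero n).symm) hw
    exact this

/-- Knight–Saraph: a group back-and-forth equivalent at rank 3 to a finitely generated
group is isomorphic to it. -/
theorem gbf_three_fg_iso {G H : Type*} [Group G] [Group H] (hfg : Group.FG H)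
    (h : GBF G H 3 0 (fun i => i.elim0) (fun i => i.elim0)) :
    Nonempty (G ≃* H) := by
  classical
  obtain ⟨s, hs⟩ := hfg.out
  -- a generating tuple for H
  set m := s.card with hm
  set h1 : Fin m → H := fun i => ((s.equivFin.symm i : s) : H) with hh1
  have hrange1 : Set.range h1 = (s : Set H) := by
    ext x
    constructor
    · rintro ⟨i, rfl⟩; exact (s.equivFin.symm i).2
    · rintro hx
      exact ⟨s.equivFin ⟨x, hx⟩, by simp [hh1]⟩
  -- unfold the hypothesis once: rank 3
  rw [GBF] at h
  rcases h with ⟨h30, _⟩ | ⟨_, _, hback⟩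
  · exact absurd h30 (by exact_mod_cast (by norm_num : (3:ℕ) ≠ 0))
  -- back at β = 2 with the generating tuple
  obtain ⟨g1, hg1⟩ := hback 2 (by exact_mod_cast (by norm_num : (2:ℕ) < 3)) m h1
  set gbar : Fin (0 + m) → G := Fin.append (fun i => i.elim0) g1 with hgbar
  set hbar : Fin (0 + m) → H := Fin.append (fun i => i.elim0) h1 with hhbar
  -- hbar still generates H
  have hrangebar : Set.range hbar = (s : Set H) := by
    rw [← hrange1, hhbar, Fin.append_left_nil _ _ rfl]
    exact Function.Surjective.range_comp
      (fun j => ⟨Fin.cast (Nat.zero_add m).symm j, by apply Fin.ext; rfl⟩) h1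
  have hφsurj : Function.Surjective (FreeGroup.lift hbar) := by
    rw [← MonoidHom.range_eq_top, FreeGroup.range_lift_eq_closure, hrangebar, hs]
  -- unfold rank 2
  rw [GBF] at hg1
  rcases hg1 with ⟨h20, _⟩ | ⟨_, hforth2, _⟩
  · exact absurd h20 (by exact_mod_cast (by norm_num : (2:ℕ) ≠ 0))
  -- word equivalence of the distinguished tuples
  have hW : WordEq G H gbar hbar := by
    obtain ⟨d, hd⟩ := hforth2 0 (by exact_mod_cast (by norm_num : (0:ℕ) < 2)) 0 Fin.elim0
    have hw := KS.gbf_zero hd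
    rw [Fin.append_right_nil gbar Fin.elim0 rfl, Fin.append_right_nil hbar d rfl] at hw
    exact KS.wordEq_comp (Fin.cast (Nat.add_zero (0 + m)).symm) hw
  -- gbar generates G
  have hψsurj : Function.Surjective (FreeGroup.lift gbar) := by
    intro x
    obtain ⟨d1, hd1⟩ := hforth2 1 (by exact_mod_cast (by norm_num : (1:ℕ) < 2)) 1 (fun _ => x)
    have hw1 : WordEq G H (Fin.append gbar fun _ => x) (Fin.append hbar d1) :=
      KS.gbf_wordEq hd1
    obtain ⟨w, hwd⟩ := hφsurj (d1 0)
    -- the word saying "last coordinate equals w of the previous ones"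
    set v : FreeGroup (Fin (0 + m + 1)) :=
      (FreeGroup.map (Fin.castAdd 1) w)⁻¹ * FreeGroup.of (Fin.natAdd (0 + m) 0) with hv
    have hcompH : (Fin.append hbar d1) ∘ (Fin.castAdd 1) = hbar :=
      funext fun i => Fin.append_left _ _ i
    have hcompG : (Fin.append gbar fun _ => x) ∘ (Fin.castAdd 1) = gbar :=
      funext fun i => Fin.append_left _ _ i
    have hvH : FreeGroup.lift (Fin.append hbar d1) v = 1 := by
      rw [hv, map_mul, map_inv, KS.lift_map, hcompH, FreeGroup.lift_apply_of, hwd,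
        Fin.append_right]
      exact inv_mul_cancel _
    have hvG := (hw1 v).2 hvH
    rw [hv, map_mul, map_inv, KS.lift_map, hcompG, FreeGroup.lift_apply_of,
      Fin.append_right] at hvG
    refine ⟨w, ?_⟩
    have := congrArg (fun y => FreeGroup.lift gbar w * y) hvG
    simpa [mul_assoc] using this.symm
  -- equal kernels
  have hker : (FreeGroup.lift gbar).ker = (FreeGroup.lift hbar).ker := by
    ext w
    simp only [MonoidHom.mem_ker]
    exact hW w
  exact ⟨((QuotientGroup.quotientKerEquivOfSurjective _ hψsurj).symm.trans
    (QuotientGroup.quotientMulEquivOfEq hker)).trans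
    (QuotientGroup.quotientKerEquivOfSurjective _ hφsurj)⟩
end

section
/- For distinct integers m, n ≥ 2, the free groups F_m and F_n are not ≡ᵇᶠ_3-equivalent. -/
/-!
Rank 2 already forces isomorphism of finitely generated groups: go forth with a generating tuple
of `G`, then back with one of `H`. The two resulting tuples satisfy the same word equations and
each generates its group, so `G` and `H` are quotients of one free group by the same kernel.
Free groups of different finite rank are not isomorphic (compare their abelianizations).
-/

namespace GBF

variable {G H : Type*} [Group G] [Group H] {α β : Ordinal} {n : ℕ}
  {g : Fin n → G} {h : Fin n → H}

theorem forth (hgh : GBF G H α n g h) (hβ : β < α) {m : ℕ} (c : Fin m → G) :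
    ∃ d : Fin m → H, GBF G H β (n + m) (Fin.append g c) (Fin.append h d) := by
  rw [GBF] at hgh
  rcases hgh with ⟨rfl, -⟩ | ⟨-, hforth, -⟩
  · exact absurd hβ not_lt_zero
  · exact hforth β hβ m c

theorem back (hgh : GBF G H α n g h) (hβ : β < α) {m : ℕ} (d : Fin m → H) :
    ∃ c : Fin m → G, GBF G H β (n + m) (Fin.append g c) (Fin.append h d) := by
  rw [GBF] at hgh
  rcases hgh with ⟨rfl, -⟩ | ⟨-, -, hback⟩
  · exact absurd hβ not_lt_zero
  · exact hback β hβ m d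

theorem wordEq_of_zero (hgh : GBF G H 0 n g h) : WordEq G H g h := by
  rw [GBF] at hgh
  rcases hgh with ⟨-, hw⟩ | ⟨h0, -⟩
  · exact hw
  · exact absurd rfl h0

end GBF

theorem WordEq.nonempty_mulEquiv {ι G H : Type*} [Group G] [Group H] {a : ι → G} {b : ι → H}
    (hw : WordEq G H a b) (ha : Subgroup.closure (Set.range a) = ⊤)
    (hb : Subgroup.closure (Set.range b) = ⊤) : Nonempty (G ≃* H) := by
  have hsa : Function.Surjective (FreeGroup.lift a) := by
    rw [← MonoidHom.range_eq_top, FreeGroup.range_lift_eq_closure, ha]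
  have hsb : Function.Surjective (FreeGroup.lift b) := by
    rw [← MonoidHom.range_eq_top, FreeGroup.range_lift_eq_closure, hb]
  have hker : (FreeGroup.lift a).ker = (FreeGroup.lift b).ker := by
    ext w
    exact hw w
  exact ⟨(QuotientGroup.quotientKerEquivOfSurjective _ hsa).symm.trans <|
    (QuotientGroup.quotientMulEquivOfEq hker).trans <|
    QuotientGroup.quotientKerEquivOfSurjective _ hsb⟩

section append

variable {G : Type*} [Group G] {k l : ℕ}

theorem closure_range_append_eq_top_of_left {u : Fin k → G}
    (hu : Subgroup.closure (Set.range u) = ⊤) (v : Fin l → G) :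
    Subgroup.closure (Set.range (Fin.append u v)) = ⊤ := by
  refine eq_top_mono (Subgroup.closure_mono ?_) hu
  rintro _ ⟨i, rfl⟩
  exact ⟨Fin.castAdd l i, Fin.append_left u v i⟩

theorem closure_range_append_eq_top_of_right (u : Fin k → G) {v : Fin l → G}
    (hv : Subgroup.closure (Set.range v) = ⊤) :
    Subgroup.closure (Set.range (Fin.append u v)) = ⊤ := by
  refine eq_top_mono (Subgroup.closure_mono ?_) hv
  rintro _ ⟨i, rfl⟩
  exact ⟨Fin.natAdd k i, Fin.append_right u v i⟩

end append

theorem Group.FG.exists_fin_closure_range_eq_top (G : Type*) [Group G] [Group.FG G] :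
    ∃ (k : ℕ) (a : Fin k → G), Subgroup.closure (Set.range a) = ⊤ := by
  obtain ⟨S, hS⟩ := Group.FG.out (G := G)
  refine ⟨S.card, Subtype.val ∘ S.equivFin.symm, ?_⟩
  rwa [EquivLike.range_comp, Subtype.range_coe]

theorem GBF.nonempty_mulEquiv {G H : Type*} [Group G] [Group H] [Group.FG G] [Group.FG H]
    {α : Ordinal} (hα : 1 < α)
    (hGH : GBF G H α 0 (fun i => i.elim0) (fun i => i.elim0)) : Nonempty (G ≃* H) := by
  obtain ⟨k, a, ha⟩ := Group.FG.exists_fin_closure_range_eq_top G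
  obtain ⟨l, b, hb⟩ := Group.FG.exists_fin_closure_range_eq_top H
  obtain ⟨d, h1⟩ := hGH.forth hα a
  obtain ⟨c, h0⟩ := h1.back zero_lt_one b
  refine h0.wordEq_of_zero.nonempty_mulEquiv ?_ ?_
  · exact closure_range_append_eq_top_of_left (closure_range_append_eq_top_of_right _ ha) c
  · exact closure_range_append_eq_top_of_right _ hb

theorem freeGroup_not_gbf_three_general {m n : ℕ} (hmn : m ≠ n) :
    ¬ GBF (FreeGroup (Fin m)) (FreeGroup (Fin n)) 3 0
      (fun i => i.elim0) (fun i => i.elim0) := by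
  intro hGH
  obtain ⟨e⟩ := hGH.nonempty_mulEquiv (by norm_num)
  exact hmn (Fin.equiv_iff_eq.1 ⟨Equiv.ofFreeGroupEquiv e⟩)

/-- Distinct finitely generated free groups are not back-and-forth equivalent at rank 3. -/
theorem freeGroup_not_gbf_three {m n : ℕ} (hm : 2 ≤ m) (hn : 2 ≤ n) (hmn : m ≠ n) :
    ¬ GBF (FreeGroup (Fin m)) (FreeGroup (Fin n)) 3 0
      (fun i => i.elim0) (fun i => i.elim0) :=
  freeGroup_not_gbf_three_general hmn
end

section
/- For any two infinite types (index sets) κ and λ, the free groups F_κ and F_λ are ≡ᵇᶠ_α-equivalent for every ordinal α (equivalently, Duplicator wins the back-and-forth game of any ordinal length between F_κ and F_λ). -/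
open FreeGroup Set

namespace Set.InjOn

variable {α β : Type*} [Infinite β] {f : α → β} {s : Set α}

theorem exists_extend_insert (hs : s.Finite) (hf : InjOn f s) (a : α) :
    ∃ f' : α → β, EqOn f' f s ∧ InjOn f' (insert a s) := by
  classical
  by_cases ha : a ∈ s
  · exact ⟨f, eqOn_refl f s, by rwa [insert_eq_of_mem ha]⟩
  obtain ⟨b, hb⟩ := (hs.image f).exists_notMem
  have heq : EqOn (Function.update f a b) f s := fun x hx =>
    Function.update_of_ne (ne_of_mem_of_not_mem hx ha) _ _
  refine ⟨Function.update f a b, heq, (injOn_insert ha).2 ⟨hf.congr heq.symm, ?_⟩⟩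
  rwa [heq.image_eq, Function.update_self]

theorem exists_extend (hs : s.Finite) (hf : InjOn f s) {t : Set α} (ht : t.Finite) :
    ∃ f' : α → β, EqOn f' f s ∧ InjOn f' (s ∪ t) := by
  induction t, ht using Set.Finite.induction_on with
  | empty => exact ⟨f, eqOn_refl f s, by rwa [union_empty]⟩
  | @insert a t _ ht ih =>
    obtain ⟨f₁, hf₁, hf₁inj⟩ := ih
    obtain ⟨f₂, hf₂, hf₂inj⟩ := hf₁inj.exists_extend_insert (hs.union ht) a
    exact ⟨f₂, (hf₂.mono subset_union_left).trans hf₁, by rwa [union_insert]⟩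

end Set.InjOn

namespace FreeGroup

variable {α β : Type*}

theorem exists_finite_mem_closure (x : FreeGroup α) :
    ∃ s : Set α, s.Finite ∧ x ∈ Subgroup.closure (of '' s) := by
  induction x using FreeGroup.induction_on with
  | C1 => exact ⟨∅, finite_empty, one_mem _⟩
  | of a => exact ⟨{a}, finite_singleton a, Subgroup.subset_closure ⟨a, rfl, rfl⟩⟩
  | inv_of a ih =>
    obtain ⟨s, hs, ha⟩ := ih
    exact ⟨s, hs, inv_mem ha⟩
  | mul x y ihx ihy =>
    obtain ⟨s, hs, hx⟩ := ihx
    obtain ⟨t, ht, hy⟩ := ihy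
    exact ⟨s ∪ t, hs.union ht,
      mul_mem (Subgroup.closure_mono (image_mono subset_union_left) hx)
        (Subgroup.closure_mono (image_mono subset_union_right) hy)⟩

theorem eqOn_map_closure {f f' : α → β} {s : Set α} (h : EqOn f f' s) :
    EqOn (map f) (map f') (Subgroup.closure (of '' s)) :=
  MonoidHom.eqOn_closure <| by
    rintro _ ⟨a, ha, rfl⟩
    simp [h ha]

theorem map_mem_closure_image {f : α → β} {s : Set α} {x : FreeGroup α}
    (hx : x ∈ Subgroup.closure (of '' s)) : map f x ∈ Subgroup.closure (of '' (f '' s)) := by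
  have himage : of '' (f '' s) = map f '' (of '' s) := by simp only [image_image, map.of]
  rw [himage, ← MonoidHom.map_closure]
  exact Subgroup.mem_map_of_mem _ hx

end FreeGroup

section WordEq

variable {ι G H : Type*} [Group G] [Group H] {g : ι → G} {h : ι → H}

theorem lift_eq_one_of_map_eq (φ : G →* H) (hφ : ∀ i, φ (g i) = h i) {w : FreeGroup ι}
    (hw : FreeGroup.lift g w = 1) : FreeGroup.lift h w = 1 := by
  have hlift : FreeGroup.lift h = φ.comp (FreeGroup.lift g) :=
    FreeGroup.ext_hom _ _ fun i => by simp [hφ]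
  rw [hlift, MonoidHom.comp_apply, hw, φ.map_one]

theorem WordEq.of_map_eq (φ : G →* H) (ψ : H →* G) (hφ : ∀ i, φ (g i) = h i)
    (hψ : ∀ i, ψ (h i) = g i) : WordEq G H g h :=
  fun _ => ⟨lift_eq_one_of_map_eq φ hφ, lift_eq_one_of_map_eq ψ hψ⟩

end WordEq

def IsFiniteRenaming {ι κ lam : Type*} (g : ι → FreeGroup κ) (h : ι → FreeGroup lam) : Prop :=
  ∃ s : Set κ, s.Finite ∧ ∃ σ : κ → lam, InjOn σ s ∧
    ∀ i, g i ∈ Subgroup.closure (of '' s) ∧ map σ (g i) = h i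

namespace IsFiniteRenaming

variable {κ lam : Type*}

theorem symm {ι : Type*} [Nonempty κ] {g : ι → FreeGroup κ} {h : ι → FreeGroup lam}
    (H : IsFiniteRenaming g h) : IsFiniteRenaming h g := by
  obtain ⟨s, hs, σ, hσ, hg⟩ := H
  refine ⟨σ '' s, hs.image σ, Function.invFunOn σ s, Function.invFunOn_injOn_image σ s,
    fun i => ⟨?_, ?_⟩⟩
  · rw [← (hg i).2]
    exact map_mem_closure_image (hg i).1
  · rw [← (hg i).2, map.comp]
    exact (eqOn_map_closure (f' := id) (fun _ ha => hσ.leftInvOn_invFunOn ha) (hg i).1).trans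
      (map.id _)

theorem wordEq {ι : Type*} [Nonempty κ] {g : ι → FreeGroup κ} {h : ι → FreeGroup lam}
    (H : IsFiniteRenaming g h) : WordEq (FreeGroup κ) (FreeGroup lam) g h := by
  obtain ⟨_, _, τ, _, hh⟩ := H.symm
  obtain ⟨_, _, σ, _, hg⟩ := H
  exact WordEq.of_map_eq (map σ) (map τ) (fun i => (hg i).2) (fun i => (hh i).2)

theorem exists_append [Infinite lam] {n m : ℕ} {g : Fin n → FreeGroup κ}
    {h : Fin n → FreeGroup lam} (H : IsFiniteRenaming g h) (c : Fin m → FreeGroup κ) :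
    ∃ d : Fin m → FreeGroup lam, IsFiniteRenaming (Fin.append g c) (Fin.append h d) := by
  obtain ⟨s, hs, σ, hσ, hg⟩ := H
  choose t ht hc using fun p => exists_finite_mem_closure (c p)
  obtain ⟨σ', hσ's, hσ'⟩ := hσ.exists_extend hs (finite_iUnion ht)
  refine ⟨fun p => map σ' (c p), s ∪ ⋃ p, t p, hs.union (finite_iUnion ht), σ', hσ',
    (Fin.forall_fin_add _).2 ⟨fun i => ?_, fun p => ?_⟩⟩
  · simp only [Fin.append_left]
    refine ⟨Subgroup.closure_mono (image_mono subset_union_left) (hg i).1, ?_⟩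
    rw [← (hg i).2]
    exact eqOn_map_closure hσ's (hg i).1
  · simp only [Fin.append_right, and_true]
    exact Subgroup.closure_mono
      (image_mono (subset_union_of_subset_right (subset_iUnion t p) _)) (hc p)

theorem gbf [Infinite κ] [Infinite lam] (α : Ordinal) {n : ℕ} {g : Fin n → FreeGroup κ}
    {h : Fin n → FreeGroup lam} (H : IsFiniteRenaming g h) :
    GBF (FreeGroup κ) (FreeGroup lam) α n g h := by
  induction α using WellFoundedLT.induction generalizing n with
  | ind α ih =>
    rw [GBF]
    rcases eq_or_ne α 0 with rfl | hα
    · exact Or.inl ⟨rfl, H.wordEq⟩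
    · refine Or.inr ⟨hα, fun β hβ m c => ?_, fun β hβ m d => ?_⟩
      · obtain ⟨d, hd⟩ := H.exists_append c
        exact ⟨d, ih β hβ hd⟩
      · obtain ⟨c, hc⟩ := H.symm.exists_append d
        exact ⟨c, ih β hβ hc.symm⟩

end IsFiniteRenaming

/-- Free groups on infinite generating sets are back-and-forth equivalent at every rank. -/
theorem freeGroup_infinite_gbf (κ lam : Type*) [Infinite κ] [Infinite lam]
    (α : Ordinal) :
    GBF (FreeGroup κ) (FreeGroup lam) α 0 (fun i => i.elim0) (fun i => i.elim0) :=
  IsFiniteRenaming.gbf α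
    ⟨∅, finite_empty, fun _ => Classical.arbitrary lam, injOn_empty _, fun i => i.elim0⟩
end

section
/- Let G and H be groups and let g = (g₁,…,g_n) ∈ Gⁿ and h = (h₁,…,h_n) ∈ Hⁿ be tuples such that for every group word w in n variables, w(g) = 1 in G iff w(h) = 1 in H. For ℓ = 1,…,m fix complex coefficients b_{s,ℓ} (s = 1,…,p_ℓ) and indices i(s,ℓ) ∈ {1,…,n}, and define y_ℓ = Σ_s b_{s,ℓ}·g_{i(s,ℓ)} in the group algebra ℂ[G] and z_ℓ = Σ_s b_{s,ℓ}·h_{i(s,ℓ)} in ℂ[H]. Then for every *-polynomial p in m noncommuting variables, the coefficient at the group identity of p(y₁,…,y_m) in ℂ[G] equals the coefficient at the identity of p(z₁,…,z_m) in ℂ[H]. -/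
/-- Evaluation of a `*`-polynomial (a noncommutative polynomial in variables
`(ℓ, false)` and their formal adjoints `(ℓ, true)`) in a group algebra, where the
variable `ℓ` is sent to `y ℓ` and its formal adjoint to the star of `y ℓ`. -/
noncomputable def starPolyEval {G : Type*} [Group G] {m : ℕ}
    (y yStar : Fin m → MonoidAlgebra ℂ G) (P : FreeAlgebra ℂ (Fin m × Bool)) :
    MonoidAlgebra ℂ G :=
  FreeAlgebra.lift ℂ (fun v : Fin m × Bool => if v.2 then yStar v.1 else y v.1) P

/-! Both evaluations are images of a single element of the group algebra of the free group
`F` on `n` generators, under the algebra maps induced by `FreeGroup.lift g : F →* G` and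
`FreeGroup.lift h : F →* H`. The coefficient at `1` of such an image is the sum of the
coefficients over the kernel, and by hypothesis the two kernels coincide. -/

open MonoidAlgebra

theorem Finsupp.mapDomain_apply_eq_of_fiber_iff {α β γ M : Type*} [AddCommMonoid M]
    {f : α → β} {f' : α → γ} {b : β} {c : γ} (hfib : ∀ a, f a = b ↔ f' a = c) (x : α →₀ M) :
    x.mapDomain f b = x.mapDomain f' c := by
  classical
  simp only [Finsupp.mapDomain, Finsupp.sum_apply, Finsupp.single_apply, hfib]

theorem MonoidAlgebra.coeff_one_mapDomainAlgHom_eq_of_ker_iff {R A K G H : Type*}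
    [CommSemiring R] [Semiring A] [Algebra R A] [Monoid K] [Monoid G] [Monoid H]
    (f : K →* G) (f' : K →* H) (hker : ∀ w, f w = 1 ↔ f' w = 1) (x : A[K]) :
    (mapDomainAlgHom R A f x).coeff 1 = (mapDomainAlgHom R A f' x).coeff 1 :=
  x.coeff.mapDomain_apply_eq_of_fiber_iff hker

theorem starPolyEval_mapDomainAlgHom {K G : Type*} [Group K] [Group G] {m : ℕ} (f : K →* G)
    (y yStar : Fin m → MonoidAlgebra ℂ K) (P : FreeAlgebra ℂ (Fin m × Bool)) :
    starPolyEval (mapDomainAlgHom ℂ ℂ f ∘ y) (mapDomainAlgHom ℂ ℂ f ∘ yStar) P =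
      mapDomainAlgHom ℂ ℂ f (starPolyEval y yStar P) := by
  simp only [starPolyEval, ← AlgHom.comp_apply]
  congr 1
  ext v
  by_cases hv : v.2 <;> simp [hv]

/-- If the tuples `g` and `h` satisfy the same group-word equations, then the
corresponding linear combinations of group elements in the group algebras have the same
trace (coefficient at the identity) under every `*`-polynomial. -/
theorem trace_starPoly_eq {G H : Type*} [Group G] [Group H] {n : ℕ}
    (g : Fin n → G) (h : Fin n → H) (h0 : WordEq G H g h)
    {m : ℕ} (p : Fin m → ℕ) (b : ∀ ℓ, Fin (p ℓ) → ℂ) (idx : ∀ ℓ, Fin (p ℓ) → Fin n)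
    (y : Fin m → MonoidAlgebra ℂ G) (z : Fin m → MonoidAlgebra ℂ H)
    (hy : ∀ ℓ, y ℓ = ∑ s, MonoidAlgebra.single (g (idx ℓ s)) (b ℓ s))
    (hz : ∀ ℓ, z ℓ = ∑ s, MonoidAlgebra.single (h (idx ℓ s)) (b ℓ s))
    (yStar : Fin m → MonoidAlgebra ℂ G) (zStar : Fin m → MonoidAlgebra ℂ H)
    (hyStar : ∀ ℓ, yStar ℓ = ∑ s, MonoidAlgebra.single (g (idx ℓ s))⁻¹ (starRingEnd ℂ (b ℓ s)))
    (hzStar : ∀ ℓ, zStar ℓ = ∑ s, MonoidAlgebra.single (h (idx ℓ s))⁻¹ (starRingEnd ℂ (b ℓ s)))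
    (P : FreeAlgebra ℂ (Fin m × Bool)) :
    (starPolyEval y yStar P).coeff 1 = (starPolyEval z zStar P).coeff 1 := by
  let x ℓ : MonoidAlgebra ℂ (FreeGroup (Fin n)) := ∑ s, single (.of (idx ℓ s)) (b ℓ s)
  let xStar ℓ : MonoidAlgebra ℂ (FreeGroup (Fin n)) :=
    ∑ s, single (.of (idx ℓ s))⁻¹ (starRingEnd ℂ (b ℓ s))
  have hy' : y = mapDomainAlgHom ℂ ℂ (FreeGroup.lift g) ∘ x := funext fun ℓ => by simp [x, hy]
  have hyStar' : yStar = mapDomainAlgHom ℂ ℂ (FreeGroup.lift g) ∘ xStar :=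
    funext fun ℓ => by simp [xStar, hyStar]
  have hz' : z = mapDomainAlgHom ℂ ℂ (FreeGroup.lift h) ∘ x := funext fun ℓ => by simp [x, hz]
  have hzStar' : zStar = mapDomainAlgHom ℂ ℂ (FreeGroup.lift h) ∘ xStar :=
    funext fun ℓ => by simp [xStar, hzStar]
  rw [hy', hyStar', hz', hzStar', starPolyEval_mapDomainAlgHom, starPolyEval_mapDomainAlgHom]
  exact coeff_one_mapDomainAlgHom_eq_of_ker_iff _ _ h0 _
end

section
/- Suppose G is existentially closed, G ≡ᵇᶠ_2 H, and G and H are countable. Then every 2-generated subgroup of G is isomorphic to a 2-generated subgroup of H and vice versa: for every pair a₁, a₂ ∈ G there exist b₁, b₂ ∈ H such that the subgroup generated by a₁, a₂ in G is isomorphic to the subgroup generated by b₁, b₂ in H via a_i ↦ b_i, and symmetrically. -/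
/-- A group `G` is existentially closed: any finite system of equations and inequations
with parameters from `G` that has a solution in some group extending `G` already has a
solution in `G`. -/
def IsECGroup (G : Type u) [Group G] : Prop :=
  ∀ (K : Type u) (_ : Group K) (f : G →* K), Function.Injective f →
    ∀ (n m : ℕ) (par : Fin n → G) (E I : Finset (FreeGroup (Fin n ⊕ Fin m))),
      (∃ x : Fin m → K,
        (∀ w ∈ E, FreeGroup.lift (Sum.elim (f ∘ par) x) w = 1) ∧
        (∀ w ∈ I, FreeGroup.lift (Sum.elim (f ∘ par) x) w ≠ 1)) →
      (∃ x : Fin m → G,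
        (∀ w ∈ E, FreeGroup.lift (Sum.elim par x) w = 1) ∧
        (∀ w ∈ I, FreeGroup.lift (Sum.elim par x) w ≠ 1))

/-- Tuples with the same word equations generate isomorphic subgroups via `g i ↦ h i`. -/
theorem wordEq_iso {G H : Type*} [Group G] [Group H] {ι : Type*}
    (g : ι → G) (h : ι → H) (hw : WordEq G H g h) :
    ∃ e : (Subgroup.closure (Set.range g) : Subgroup G) ≃*
          (Subgroup.closure (Set.range h) : Subgroup H),
      ∀ i : ι, (e ⟨g i, Subgroup.subset_closure (Set.mem_range_self i)⟩ : H) = h i := by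
  set f := FreeGroup.lift g with hf
  set k := FreeGroup.lift h with hk
  have hker : f.ker = k.ker := by
    ext w
    simp only [MonoidHom.mem_ker]
    exact hw w
  have hrf : f.range = Subgroup.closure (Set.range g) := FreeGroup.range_lift_eq_closure
  have hrk : k.range = Subgroup.closure (Set.range h) := FreeGroup.range_lift_eq_closure
  let e : (Subgroup.closure (Set.range g) : Subgroup G) ≃*
          (Subgroup.closure (Set.range h) : Subgroup H) :=
    ((((MulEquiv.subgroupCongr hrf.symm).trans
      (QuotientGroup.quotientKerEquivRange f).symm).trans
      (QuotientGroup.quotientMulEquivOfEq hker)).trans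
      (QuotientGroup.quotientKerEquivRange k)).trans
      (MulEquiv.subgroupCongr hrk)
  refine ⟨e, fun i => ?_⟩
  have h1 : (MulEquiv.subgroupCongr hrf.symm)
      ⟨g i, Subgroup.subset_closure (Set.mem_range_self i)⟩
      = ⟨f (FreeGroup.of i), ⟨FreeGroup.of i, rfl⟩⟩ := by
    apply Subtype.ext
    simp [MulEquiv.subgroupCongr_apply, hf]
  have h2 : (QuotientGroup.quotientKerEquivRange f).symm ⟨f (FreeGroup.of i), ⟨FreeGroup.of i, rfl⟩⟩
      = QuotientGroup.mk (FreeGroup.of i) := by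
    rw [MulEquiv.symm_apply_eq]
    rfl
  show ((MulEquiv.subgroupCongr hrk) ((QuotientGroup.quotientKerEquivRange k)
    ((QuotientGroup.quotientMulEquivOfEq hker)
      ((QuotientGroup.quotientKerEquivRange f).symm
        ((MulEquiv.subgroupCongr hrf.symm)
          ⟨g i, Subgroup.subset_closure (Set.mem_range_self i)⟩)))) : H) = h i
  rw [h1, h2, QuotientGroup.quotientMulEquivOfEq_mk]
  have h3 : (QuotientGroup.quotientKerEquivRange k) (QuotientGroup.mk (FreeGroup.of i))
      = ⟨k (FreeGroup.of i), ⟨FreeGroup.of i, rfl⟩⟩ := rfl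
  rw [h3]
  simp [MulEquiv.subgroupCongr_apply, hk]

/-- Specialization of `wordEq_iso` to tuples whose ranges are given pairs. -/
theorem pair_iso {G H : Type*} [Group G] [Group H] {n : ℕ}
    (g : Fin n → G) (h : Fin n → H) (hw : WordEq G H g h) (i₀ i₁ : Fin n)
    (hcov : ∀ i, i = i₀ ∨ i = i₁) (a₁ a₂ : G) (b₁ b₂ : H)
    (ha₁ : g i₀ = a₁) (ha₂ : g i₁ = a₂) (hb₁ : h i₀ = b₁) (hb₂ : h i₁ = b₂) :
    ∃ e : (Subgroup.closure {a₁, a₂} : Subgroup G) ≃*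
          (Subgroup.closure {b₁, b₂} : Subgroup H),
      (e ⟨a₁, Subgroup.subset_closure (by simp)⟩ : H) = b₁ ∧
      (e ⟨a₂, Subgroup.subset_closure (by simp)⟩ : H) = b₂ := by
  subst ha₁ ha₂ hb₁ hb₂
  have hgset : Set.range g = {g i₀, g i₁} := by
    ext x
    simp only [Set.mem_range, Set.mem_insert_iff, Set.mem_singleton_iff]
    constructor
    · rintro ⟨i, rfl⟩
      rcases hcov i with rfl | rfl
      · exact Or.inl rfl
      · exact Or.inr rfl
    · rintro (rfl | rfl)
      · exact ⟨i₀, rfl⟩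
      · exact ⟨i₁, rfl⟩
  have hhset : Set.range h = {h i₀, h i₁} := by
    ext x
    simp only [Set.mem_range, Set.mem_insert_iff, Set.mem_singleton_iff]
    constructor
    · rintro ⟨i, rfl⟩
      rcases hcov i with rfl | rfl
      · exact Or.inl rfl
      · exact Or.inr rfl
    · rintro (rfl | rfl)
      · exact ⟨i₀, rfl⟩
      · exact ⟨i₁, rfl⟩
  obtain ⟨e, he⟩ := wordEq_iso g h hw
  have hgc : (Subgroup.closure {g i₀, g i₁} : Subgroup G) = Subgroup.closure (Set.range g) := by
    rw [hgset]
  have hhc : (Subgroup.closure (Set.range h) : Subgroup H) = Subgroup.closure {h i₀, h i₁} := by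
    rw [hhset]
  refine ⟨((MulEquiv.subgroupCongr hgc).trans e).trans (MulEquiv.subgroupCongr hhc), ?_, ?_⟩
  · have h1 : (MulEquiv.subgroupCongr hgc) ⟨g i₀, Subgroup.subset_closure (by simp)⟩
        = ⟨g i₀, Subgroup.subset_closure (Set.mem_range_self i₀)⟩ := Subtype.ext rfl
    show ((MulEquiv.subgroupCongr hhc) (e ((MulEquiv.subgroupCongr hgc)
      ⟨g i₀, Subgroup.subset_closure (by simp)⟩)) : H) = h i₀
    rw [h1]
    rw [MulEquiv.subgroupCongr_apply]
    exact he i₀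
  · have h1 : (MulEquiv.subgroupCongr hgc) ⟨g i₁, Subgroup.subset_closure (by simp)⟩
        = ⟨g i₁, Subgroup.subset_closure (Set.mem_range_self i₁)⟩ := Subtype.ext rfl
    show ((MulEquiv.subgroupCongr hhc) (e ((MulEquiv.subgroupCongr hgc)
      ⟨g i₁, Subgroup.subset_closure (by simp)⟩)) : H) = h i₁
    rw [h1]
    rw [MulEquiv.subgroupCongr_apply]
    exact he i₁

/-- If `G` is existentially closed, `G ≡ᵇᶠ_2 H`, and both are countable, then `G` and
`H` have the same two-generated subgroups: every pair from one group corresponds to a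
pair from the other generating an isomorphic subgroup, via `aᵢ ↦ bᵢ`. -/
theorem two_generated_subgroups_of_gbf_two {G H : Type u} [Group G] [Group H]
    [Countable G] [Countable H] (hG : IsECGroup G)
    (h2 : GBF G H 2 0 (fun i => i.elim0) (fun i => i.elim0)) :
    (∀ a₁ a₂ : G, ∃ b₁ b₂ : H,
      ∃ e : (Subgroup.closure {a₁, a₂} : Subgroup G) ≃*
            (Subgroup.closure {b₁, b₂} : Subgroup H),
        (e ⟨a₁, Subgroup.subset_closure (by simp)⟩ : H) = b₁ ∧
        (e ⟨a₂, Subgroup.subset_closure (by simp)⟩ : H) = b₂) ∧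
    (∀ b₁ b₂ : H, ∃ a₁ a₂ : G,
      ∃ e : (Subgroup.closure {a₁, a₂} : Subgroup G) ≃*
            (Subgroup.closure {b₁, b₂} : Subgroup H),
        (e ⟨a₁, Subgroup.subset_closure (by simp)⟩ : H) = b₁ ∧
        (e ⟨a₂, Subgroup.subset_closure (by simp)⟩ : H) = b₂) := by
  rw [GBF] at h2
  rcases h2 with ⟨h0, -⟩ | ⟨-, forth, back⟩
  · exact absurd h0 (by norm_num)
  have hcov : ∀ i : Fin (0 + 2 + 0), i = (⟨0, by omega⟩ : Fin (0 + 2 + 0)) ∨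
      i = (⟨1, by omega⟩ : Fin (0 + 2 + 0)) := by
    intro i
    rcases i with ⟨iv, hiv⟩
    have : iv = 0 ∨ iv = 1 := by omega
    rcases this with rfl | rfl
    · exact Or.inl rfl
    · exact Or.inr rfl
  constructor
  · intro a₁ a₂
    obtain ⟨d, hd⟩ := forth 1 one_lt_two 2 ![a₁, a₂]
    rw [GBF] at hd
    rcases hd with ⟨h0, -⟩ | ⟨-, forth1, -⟩
    · exact absurd h0 one_ne_zero
    obtain ⟨d', hd'⟩ := forth1 0 zero_lt_one 0 Fin.elim0
    rw [GBF] at hd'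
    rcases hd' with ⟨-, hword⟩ | ⟨hne, -⟩
    swap
    · exact absurd rfl hne
    exact ⟨_, _, pair_iso _ _ hword ⟨0, by omega⟩ ⟨1, by omega⟩ hcov a₁ a₂ _ _ (by rfl) (by rfl) (by rfl) (by rfl)⟩
  · intro b₁ b₂
    obtain ⟨c, hc⟩ := back 1 one_lt_two 2 ![b₁, b₂]
    rw [GBF] at hc
    rcases hc with ⟨h0, -⟩ | ⟨-, forth1, -⟩
    · exact absurd h0 one_ne_zero
    obtain ⟨d', hd'⟩ := forth1 0 zero_lt_one 0 Fin.elim0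
    rw [GBF] at hd'
    rcases hd' with ⟨-, hword⟩ | ⟨hne, -⟩
    swap
    · exact absurd rfl hne
    exact ⟨_, _, pair_iso _ _ hword ⟨0, by omega⟩ ⟨1, by omega⟩ hcov _ _ b₁ b₂ (by rfl) (by rfl) (by rfl) (by rfl)⟩
end
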